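/- arXiv:1505.00379 — 5 statements merged into one kernel-verified Lean document; each statement's English description precedes it below -/
import Mathlib

section
/- Let s < 0 and y > 0, and set J_{d,s}(y) = ∫₀¹ d(1-t)^{d-1} (1 - s·y·t)^{1/s} dt. Then J_{d,s}(y) ≥ d/(d + y). -/
/-!
Pointwise on `[0, 1]`, `(1 - t) ^ y ≤ exp (-y t) ≤ (1 - s y t) ^ (1 / s)`: both steps are
`1 - x ≤ exp (-x)`, the second one raised to the negative power `1 / s`, which reverses it.
Integrating against `d (1 - t) ^ (d - 1)` gives the claim, since
`∫₀¹ d (1 - t) ^ (d - 1 + y) dt = d / (d + y)`.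
-/

open MeasureTheory Real

lemma integral_one_sub_rpow {p : ℝ} (hp : -1 < p) :
    ∫ t in (0:ℝ)..1, (1 - t) ^ p = 1 / (p + 1) := by
  rw [intervalIntegral.integral_comp_sub_left (fun u : ℝ => u ^ p) 1]
  simp [integral_rpow (Or.inl hp), zero_rpow (by linarith : p + 1 ≠ 0)]

lemma integral_natCast_mul_one_sub_pow_mul_rpow (n : ℕ) {y : ℝ} (hy : 0 < y) :
    ∫ t in (0:ℝ)..1, (n : ℝ) * (1 - t) ^ (n - 1) * (1 - t) ^ y = n / (n + y) := by
  cases n with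
  | zero => simp
  | succ m =>
    have hpow : ∀ t ∈ Set.uIcc (0:ℝ) 1,
        (↑(m + 1) : ℝ) * (1 - t) ^ (m + 1 - 1) * (1 - t) ^ y = (m + 1) * (1 - t) ^ (y + m) := by
      intro t ht
      rw [Set.uIcc_of_le zero_le_one] at ht
      rw [mul_assoc, Nat.add_sub_cancel, mul_comm ((1 - t) ^ m),
        rpow_add_natCast' (by linarith [ht.2]) (by positivity)]
      push_cast
      ring
    rw [intervalIntegral.integral_congr hpow, intervalIntegral.integral_const_mul,
      integral_one_sub_rpow (by linarith [(m.cast_nonneg : (0:ℝ) ≤ m)])]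
    push_cast
    field_simp
    ring

lemma one_sub_mul_mul_pos {s y t : ℝ} (hs : s ≤ 0) (hy : 0 ≤ y) (ht : 0 ≤ t) :
    0 < 1 - s * y * t := by
  nlinarith [mul_nonneg hy ht]

lemma one_sub_rpow_le_one_sub_mul_rpow_one_div {s y t : ℝ} (hs : s < 0) (hy : 0 ≤ y)
    (ht : t ∈ Set.Icc (0:ℝ) 1) : (1 - t) ^ y ≤ (1 - s * y * t) ^ (1 / s) :=
  calc (1 - t) ^ y ≤ exp (-t) ^ y := rpow_le_rpow (by linarith [ht.2]) (one_sub_le_exp_neg t) hy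
    _ = exp (-(s * y * t)) ^ (1 / s) := by
      rw [← exp_mul, ← exp_mul]
      field_simp [hs.ne]
    _ ≤ (1 - s * y * t) ^ (1 / s) :=
      rpow_le_rpow_of_nonpos (one_sub_mul_mul_pos hs.le hy ht.1) (one_sub_le_exp_neg _)
        (one_div_neg.mpr hs).le

theorem stmt_1_general (d : ℕ) (s y : ℝ) (hs : s < 0) (hy : 0 < y) :
    (d : ℝ) / (d + y) ≤
      ∫ t in (0:ℝ)..1, (d : ℝ) * (1 - t) ^ (d - 1) * (1 - s * y * t) ^ (1 / s) := by
  rw [← integral_natCast_mul_one_sub_pow_mul_rpow d hy]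
  refine intervalIntegral.integral_mono_on zero_le_one ?_ ?_ fun t ht =>
    mul_le_mul_of_nonneg_left (one_sub_rpow_le_one_sub_mul_rpow_one_div hs hy.le ht)
      (mul_nonneg d.cast_nonneg (pow_nonneg (sub_nonneg.mpr ht.2) _))
  · exact Continuous.intervalIntegrable (by fun_prop (disch := exact hy.le)) 0 1
  · refine ContinuousOn.intervalIntegrable (.mul (by fun_prop) (.rpow_const (by fun_prop) ?_))
    rw [Set.uIcc_of_le zero_le_one]
    exact fun t ht => .inl (one_sub_mul_mul_pos hs.le hy.le ht.1).ne'

theorem stmt_1 (d : ℕ) (hd : 1 ≤ d) (s y : ℝ) (hs : s < 0) (hy : 0 < y) :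
    (d : ℝ) / (d + y) ≤
      ∫ t in (0:ℝ)..1, (d : ℝ) * (1 - t) ^ (d - 1) * (1 - s * y * t) ^ (1 / s) :=
  stmt_1_general d s y hs hy
end

section
/- Let G ⊂ ℝ^d be a convex set with nonempty interior, and let (y_n) be a sequence in ℝ^d with ‖y_n‖ → ∞. Then there exist points x₁, …, x_d ∈ G and a subsequence (y_{n(k)}) such that the Lebesgue measure of the convex hull conv(x₁, …, x_d, y_{n(k)}) tends to infinity as k → ∞. -/
open MeasureTheory Filter Pointwise

/-! Along a subsequence some coordinate `y j` is unbounded, since `‖y n‖ → ∞`. Around an interior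
point `c` of `G` take the small corner simplex `c + a • conv {0, e₁, …, e_d}` and replace its vertex
`c + a • e_j` by `y`: the resulting hull is the image of `conv {0, e₁, …, e_d}` under an affine map
of determinant `(y j - c j) * a ^ (d - 1)`, so its volume grows like `|y j|`. -/

theorem Set.insert_range_update {α ι : Type*} [DecidableEq ι] (f : ι → α) (j : ι) (z : α) :
    insert (f j) (Set.range (Function.update f j z)) = insert z (Set.range f) := by
  ext v
  simp only [Set.mem_insert_iff, Set.mem_range, Function.update_apply]
  constructor
  · rintro (rfl | ⟨i, rfl⟩)
    · exact Or.inr ⟨j, rfl⟩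
    · split_ifs with h
      · exact Or.inl rfl
      · exact Or.inr ⟨i, rfl⟩
  · rintro (rfl | ⟨i, rfl⟩)
    · exact Or.inr ⟨j, by simp⟩
    · by_cases h : i = j
      · subst h; exact Or.inl rfl
      · exact Or.inr ⟨i, by simp [h]⟩

theorem EuclideanSpace.exists_strictMono_tendsto_abs_apply {ι : Type*} [Fintype ι]
    {y : ℕ → EuclideanSpace ℝ ι} (hy : Tendsto (fun n => ‖y n‖) atTop atTop) :
    ∃ (j : ι) (φ : ℕ → ℕ), StrictMono φ ∧ Tendsto (fun k => |y (φ k) j|) atTop atTop := by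
  obtain ⟨j, hj⟩ : ∃ j, ∀ M : ℕ, ∃ᶠ n in atTop, (M : ℝ) ≤ |y n j| := by
    by_contra! h
    choose M hM using h
    have hbdd : ∀ᶠ n in atTop, ‖y n‖ ≤ √(∑ j, (M j : ℝ) ^ 2) := by
      filter_upwards [eventually_all.2 hM] with n hn
      rw [EuclideanSpace.norm_eq]
      gcongr with j
      exact (hn j).le
    exact (hbdd.and (hy.eventually_gt_atTop _)).exists.elim fun n hn => hn.1.not_gt hn.2
  obtain ⟨φ, hφ, hφj⟩ := extraction_forall_of_frequently hj
  exact ⟨j, φ, hφ, tendsto_atTop_mono hφj tendsto_natCast_atTop_atTop⟩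

theorem Matrix.det_updateCol_one {n R : Type*} [Fintype n] [DecidableEq n] [CommRing R]
    (j : n) (v : n → R) : (Matrix.updateCol (1 : Matrix n n R) j v).det = v j := by
  simpa [Matrix.one_apply] using Matrix.det_updateCol_sum (1 : Matrix n n R) j v

theorem MeasureTheory.Measure.addHaar_convexHull_vadd_image_linearMap
    {E : Type*} [NormedAddCommGroup E] [NormedSpace ℝ E] [MeasurableSpace E] [BorelSpace E]
    [FiniteDimensional ℝ E] (μ : Measure E) [μ.IsAddHaarMeasure]
    (c : E) (L : E →ₗ[ℝ] E) (s : Set E) :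
    μ (convexHull ℝ (c +ᵥ L '' s)) = ENNReal.ofReal |LinearMap.det L| * μ (convexHull ℝ s) := by
  rw [convexHull_vadd, measure_vadd, ← L.image_convexHull, Measure.addHaar_image_linearMap]

namespace EuclideanSpace

variable {ι : Type*} [Fintype ι]

variable (ι) in
noncomputable def cornerSimplex : Set (EuclideanSpace ℝ ι) :=
  convexHull ℝ (insert 0 (Set.range (basisFun ι ℝ)))

theorem volume_cornerSimplex_lt_top : volume (cornerSimplex ι) < ⊤ :=
  ((Set.toFinite _).isCompact_convexHull ℝ).measure_lt_top

theorem volume_cornerSimplex_pos : 0 < volume (cornerSimplex ι) := by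
  refine Measure.measure_pos_of_nonempty_interior _
    ((convex_convexHull ℝ _).interior_nonempty_iff_affineSpan_eq_top.2 ?_)
  rw [affineSpan_convexHull, ← AffineSubspace.coe_eq_univ_iff, affineSpan_insert_zero,
    ← (basisFun ι ℝ).coe_toBasis, (basisFun ι ℝ).toBasis.span_eq]
  rfl

/-- The vertices `c` and `c + a • eᵢ` (`i ≠ j`); the index `j` also carries `c`. -/
noncomputable def cornerFacetVertices [DecidableEq ι] (c : EuclideanSpace ℝ ι) (a : ℝ) (j : ι) :
    ι → EuclideanSpace ℝ ι :=
  fun i => c + a • Function.update (basisFun ι ℝ) j 0 i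

theorem cornerFacetVertices_mem_closedBall [DecidableEq ι] (c : EuclideanSpace ℝ ι) (a : ℝ)
    (j i : ι) : cornerFacetVertices c a j i ∈ Metric.closedBall c |a| := by
  rw [cornerFacetVertices, mem_closedBall_iff_norm, add_sub_cancel_left, norm_smul,
    Real.norm_eq_abs]
  refine mul_le_of_le_one_right (abs_nonneg a) ?_
  rcases eq_or_ne i j with rfl | hij
  · simp
  · simp [hij]

theorem volume_convexHull_insert_cornerFacetVertices [DecidableEq ι] (c w : EuclideanSpace ℝ ι)
    (a : ℝ) (j : ι) :
    volume (convexHull ℝ (insert w (Set.range (cornerFacetVertices c a j)))) =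
      ENNReal.ofReal (|w j - c j| * |a| ^ (Fintype.card ι - 1)) * volume (cornerSimplex ι) := by
  let M : Matrix ι ι ℝ := (a • 1 : Matrix ι ι ℝ).updateCol j (w - c).ofLp
  have hdet : M.det = a ^ (Fintype.card ι - 1) * (w j - c j) := by
    simp [M, Matrix.det_updateCol_smul_left, Matrix.det_updateCol_one]
  have hcol : ∀ i, Matrix.toEuclideanLin M (basisFun ι ℝ i) =
      Function.update (fun i => a • basisFun ι ℝ i) j (w - c) i := by
    intro i
    ext k
    rcases eq_or_ne i j with rfl | hij
    · simp [M]
    · simp [M, hij, Matrix.one_apply, eq_comm]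
  have hvert : insert w (Set.range (cornerFacetVertices c a j)) =
      c +ᵥ Matrix.toEuclideanLin M '' insert 0 (Set.range (basisFun ι ℝ)) := by
    rw [← Set.insert_range_update _ j 0, Set.image_insert_eq, Set.vadd_set_insert,
      ← Set.range_comp, Set.vadd_set_range, hcol, Function.update_self, vadd_eq_add,
      add_sub_cancel]
    refine congrArg (insert w) (congrArg Set.range (funext fun i => ?_))
    simp only [cornerFacetVertices, Function.comp_apply, vadd_eq_add]
    rcases eq_or_ne i j with rfl | hij
    · simp
    · rw [Function.update_of_ne hij, hcol, Function.update_of_ne hij]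
  rw [hvert, Measure.addHaar_convexHull_vadd_image_linearMap, LinearMap.det_toLpLin, hdet,
    cornerSimplex, abs_mul, abs_pow, mul_comm (|a| ^ _), mul_comm]

end EuclideanSpace

theorem stmt_10_general (d : ℕ) (G : Set (EuclideanSpace ℝ (Fin d)))
    (hGint : (interior G).Nonempty)
    (y : ℕ → EuclideanSpace ℝ (Fin d))
    (hy : Tendsto (fun n => ‖y n‖) atTop atTop) :
    ∃ x : Fin d → EuclideanSpace ℝ (Fin d), (∀ i, x i ∈ G) ∧
      ∃ φ : ℕ → ℕ, StrictMono φ ∧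
        Tendsto (fun k =>
            (volume (convexHull ℝ (insert (y (φ k)) (Set.range x)))).toReal)
          atTop atTop := by
  obtain ⟨j, φ, hφ, hyj⟩ := EuclideanSpace.exists_strictMono_tendsto_abs_apply hy
  obtain ⟨c, hc⟩ := hGint
  obtain ⟨r, hr, hball⟩ := Metric.isOpen_iff.1 isOpen_interior c hc
  have hr2 : |r / 2| < r := by rw [abs_of_pos (half_pos hr)]; exact half_lt_self hr
  refine ⟨EuclideanSpace.cornerFacetVertices c (r / 2) j, fun i => interior_subset (hball
    (Metric.closedBall_subset_ball hr2
      (EuclideanSpace.cornerFacetVertices_mem_closedBall c _ j i))), φ, hφ, ?_⟩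
  have hV : 0 < (volume (EuclideanSpace.cornerSimplex (Fin d))).toReal :=
    ENNReal.toReal_pos EuclideanSpace.volume_cornerSimplex_pos.ne'
      EuclideanSpace.volume_cornerSimplex_lt_top.ne
  simp (disch := positivity) only [EuclideanSpace.volume_convexHull_insert_cornerFacetVertices,
    ENNReal.toReal_mul, ENNReal.toReal_ofReal]
  refine (Tendsto.atTop_mul_const (by positivity) ?_).atTop_mul_const hV
  refine tendsto_atTop_mono (fun k => ?_) (tendsto_atTop_add_const_right _ (-|c j|) hyj)
  linarith [abs_sub_abs_le_abs_sub (y (φ k) j) (c j)]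

theorem stmt_10 (d : ℕ) (G : Set (EuclideanSpace ℝ (Fin d)))
    (hG : Convex ℝ G) (hGint : (interior G).Nonempty)
    (y : ℕ → EuclideanSpace ℝ (Fin d))
    (hy : Tendsto (fun n => ‖y n‖) atTop atTop) :
    ∃ x : Fin d → EuclideanSpace ℝ (Fin d), (∀ i, x i ∈ G) ∧
      ∃ φ : ℕ → ℕ, StrictMono φ ∧
        Tendsto (fun k =>
            (volume (convexHull ℝ (insert (y (φ k)) (Set.range x)))).toReal)
          atTop atTop :=
  stmt_10_general d G hGint y hy
end

section
/- Let g : ℝ^d → [0,∞] be convex with level sets D_u = {g ≤ u}, let ε = inf g be attained at some x₀, and let ε ≤ u ≤ r. Then λ_d(D_u) ≥ ((u-ε)/(r-ε))^d · λ_d(D_r). -/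
open MeasureTheory

/-! The homothety of ratio `t = (u - ε)/(r - ε)` centred at `x₀` maps `{g ≤ r}` into `{g ≤ u}` by
convexity of `g`, and it scales Lebesgue measure by `t ^ d`. -/

theorem ConvexOn.homothety_image_sublevel_subset {E : Type*} [AddCommGroup E] [Module ℝ E]
    {g : E → ℝ} (hg : ConvexOn ℝ Set.univ g) (x₀ : E) {t : ℝ} (ht₀ : 0 ≤ t) (ht₁ : t ≤ 1)
    (r : ℝ) :
    AffineMap.homothety x₀ t '' {x | g x ≤ r} ⊆ {x | g x ≤ (1 - t) * g x₀ + t * r} := by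
  rintro _ ⟨x, hx, rfl⟩
  rw [Set.mem_ofPred_eq, AffineMap.homothety_eq_lineMap, AffineMap.lineMap_apply_module]
  calc g ((1 - t) • x₀ + t • x) ≤ (1 - t) * g x₀ + t * g x :=
        hg.2 (Set.mem_univ x₀) (Set.mem_univ x) (sub_nonneg.mpr ht₁) ht₀ (by ring)
    _ ≤ (1 - t) * g x₀ + t * r := by gcongr; exact hx

theorem stmt_12_general (d : ℕ) (g : EuclideanSpace ℝ (Fin d) → ℝ)
    (hgconv : ConvexOn ℝ Set.univ g)
    (x₀ : EuclideanSpace ℝ (Fin d))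
    (ε : ℝ) (hε : ε = g x₀)
    (u r : ℝ) (hu : ε ≤ u) (hur : u ≤ r) :
    ENNReal.ofReal (((u - ε) / (r - ε)) ^ d) * volume {x | g x ≤ r} ≤
      volume {x | g x ≤ u} := by
  set t := (u - ε) / (r - ε)
  have ht₀ : 0 ≤ t := div_nonneg (sub_nonneg.mpr hu) (sub_nonneg.mpr (hu.trans hur))
  have ht₁ : t ≤ 1 := div_le_one_of_le₀ (by linarith) (sub_nonneg.mpr (hu.trans hur))
  -- when `r = ε` the junk value `t = 0` still works, because then `u = ε` too
  have hlevel : (1 - t) * g x₀ + t * r = u := by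
    rw [← hε]
    rcases eq_or_ne (r - ε) 0 with hrε | hrε
    · simp only [t, hrε, div_zero]; linarith
    · have : t * (r - ε) = u - ε := div_mul_cancel₀ _ hrε
      linarith
  calc ENNReal.ofReal (t ^ d) * volume {x | g x ≤ r}
      = volume (AffineMap.homothety x₀ t '' {x | g x ≤ r}) := by
        rw [Measure.addHaar_image_homothety, abs_of_nonneg (pow_nonneg ht₀ _),
          finrank_euclideanSpace_fin]
    _ ≤ volume {x | g x ≤ u} :=
        measure_mono (hlevel ▸ hgconv.homothety_image_sublevel_subset x₀ ht₀ ht₁ r)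

theorem stmt_12 (d : ℕ) (g : EuclideanSpace ℝ (Fin d) → ℝ)
    (hg0 : ∀ x, 0 ≤ g x) (hgconv : ConvexOn ℝ Set.univ g)
    (x₀ : EuclideanSpace ℝ (Fin d)) (hmin : ∀ x, g x₀ ≤ g x)
    (ε : ℝ) (hε : ε = g x₀)
    (u r : ℝ) (hu : ε ≤ u) (hur : u ≤ r) :
    ENNReal.ofReal (((u - ε) / (r - ε)) ^ d) * volume {x | g x ≤ r} ≤
      volume {x | g x ≤ u} :=
  stmt_12_general d g hgconv x₀ ε hε u r hu hur
end

section
/- Let -1/d < s < 0 and let (f_n) be a sequence of s-concave densities on ℝ^d. If the convex set C = {x ∈ ℝ^d : liminf_n f_n(x) > 0} has dimension d, then sup_n ‖f_n‖_∞ < ∞. -/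
/-!
If `f` is `s`-concave and `f ≥ c > 0` on a simplex `S`, then at a point `x` with `f x = M > c`,
`s`-concavity along the segments from `x` to `S` gives `f ≥ 2 ^ (1 / s) * M` on the homothetic copy
of `S` about `x` of ratio `(M / c) ^ s`. That copy has volume `(M / c) ^ (s * d) * |S|`, so
`∫ f = 1` forces `M ^ (1 + s * d) ≤ c ^ (s * d) / (2 ^ (1 / s) * |S|)`, a bound on `M` because
`1 + s * d > 0`. For all large `n`, `f n ≥ c` at the vertices of a fixed simplex spanned by points
of `C`, hence on the simplex; each of the finitely many other `f n` is bounded by the same argument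
applied to a simplex inside its own support.
-/

open MeasureTheory Filter Set Module

def IsSConcave {E : Type*} [AddCommGroup E] [Module ℝ E] (s : ℝ) (f : E → ℝ) : Prop :=
  ∀ x y : E, ∀ θ : ℝ, θ ∈ Ioo (0 : ℝ) 1 → 0 < f x → 0 < f y →
    ((1 - θ) * f x ^ s + θ * f y ^ s) ^ (1 / s) ≤ f ((1 - θ) • x + θ • y)

theorem exists_pos_forall_le_of_finite {ι : Type*} [Finite ι] {a : ι → ℝ} (ha : ∀ i, 0 < a i) :
    ∃ c > 0, ∀ i, c ≤ a i := by
  cases isEmpty_or_nonempty ι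
  · exact ⟨1, one_pos, isEmptyElim⟩
  · obtain ⟨i, hi⟩ := Finite.exists_min a
    exact ⟨a i, ha i, hi⟩

theorem exists_pos_eventually_le_of_liminf_pos {ι : Type*} [Finite ι] {u : ι → ℕ → ℝ}
    (hu : ∀ i n, 0 ≤ u i n) (h : ∀ i, 0 < liminf (u i) atTop) :
    ∃ c > 0, ∀ᶠ n in atTop, ∀ i, c ≤ u i n := by
  obtain ⟨c, hc, hcle⟩ := exists_pos_forall_le_of_finite fun i => half_pos (h i)
  refine ⟨c, hc, eventually_all.2 fun i => ?_⟩
  have hlt : c < liminf (u i) atTop := (hcle i).trans_lt (half_lt_self (h i))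
  exact (eventually_lt_of_lt_liminf hlt (isBoundedUnder_of ⟨0, hu i⟩)).mono fun n hn => hn.le

theorem exists_forall_le_of_eventually_cofinite {ι X : Type*} {g : ι → X → ℝ} {M₀ : ℝ}
    (hg : ∀ i, ∃ M, ∀ x, g i x ≤ M) (hev : ∀ᶠ i in cofinite, ∀ x, g i x ≤ M₀) :
    ∃ M, ∀ i x, g i x ≤ M := by
  choose B hB using hg
  obtain ⟨M₁, hM₁⟩ := ((eventually_cofinite.1 hev).image B).bddAbove
  refine ⟨max M₀ M₁, fun i x => ?_⟩
  by_cases hi : ∀ x, g i x ≤ M₀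
  · exact (hi x).trans (le_max_left _ _)
  · exact (hB i x).trans ((hM₁ ⟨i, hi, rfl⟩).trans (le_max_right _ _))

theorem affineSpan_support_eq_top {E : Type*} [NormedAddCommGroup E] [NormedSpace ℝ E]
    [MeasurableSpace E] [BorelSpace E] [FiniteDimensional ℝ E] (μ : Measure E)
    [μ.IsAddHaarMeasure] {f : E → ℝ} (hf : ∫ x, f x ∂μ ≠ 0) :
    affineSpan ℝ (Function.support f) = ⊤ := by
  by_contra h
  refine hf (integral_eq_zero_of_ae ?_)
  exact measure_mono_null (subset_affineSpan ℝ _) (Measure.addHaar_affineSubspace μ _ h)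

namespace IsSConcave

section AddCommGroup

variable {E : Type*} [AddCommGroup E] [Module ℝ E] {s : ℝ} {f : E → ℝ}

theorem rpow_mean_le_apply (hf : IsSConcave s f) (hs : s < 0) {x y : E} {a b θ : ℝ}
    (ha : 0 < a) (hb : 0 < b) (hxa : a ≤ f x) (hyb : b ≤ f y) (hθ : θ ∈ Ioo (0 : ℝ) 1) :
    ((1 - θ) * a ^ s + θ * b ^ s) ^ (1 / s) ≤ f ((1 - θ) • x + θ • y) := by
  have hx := ha.trans_le hxa
  have hy := hb.trans_le hyb
  refine le_trans ?_ (hf x y θ hθ hx hy)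
  have h1θ : 0 < 1 - θ := sub_pos.2 hθ.2
  have hpos : 0 < (1 - θ) * f x ^ s + θ * f y ^ s :=
    add_pos (mul_pos h1θ (Real.rpow_pos_of_pos hx s)) (mul_pos hθ.1 (Real.rpow_pos_of_pos hy s))
  refine Real.rpow_le_rpow_of_nonpos hpos ?_ (one_div_neg.2 hs).le
  exact add_le_add (mul_le_mul_of_nonneg_left (Real.rpow_le_rpow_of_nonpos ha hxa hs.le) h1θ.le)
    (mul_le_mul_of_nonneg_left (Real.rpow_le_rpow_of_nonpos hb hyb hs.le) hθ.1.le)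

theorem convex_setOf_le (hf : IsSConcave s f) (hs : s < 0) {c : ℝ} (hc : 0 < c) :
    Convex ℝ {z | c ≤ f z} := by
  refine convex_iff_openSegment_subset.2 fun x hx y hy => ?_
  rw [openSegment_eq_image]
  rintro _ ⟨θ, hθ, rfl⟩
  have := hf.rpow_mean_le_apply hs hc hc hx hy hθ
  rwa [← add_mul, sub_add_cancel, one_mul, ← Real.rpow_mul hc.le, mul_one_div_cancel hs.ne,
    Real.rpow_one] at this

theorem two_rpow_mul_le_apply_homothety (hf : IsSConcave s f) (hs : s < 0) {c : ℝ} (hc : 0 < c)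
    {x y : E} (hx : c < f x) (hy : c ≤ f y) :
    2 ^ (1 / s) * f x ≤ f (AffineMap.homothety x ((f x / c) ^ s) y) := by
  set θ := (f x / c) ^ s with hθ
  have hx0 : 0 < f x := hc.trans hx
  have hθ0 : 0 < θ := by positivity
  have hθ1 : θ < 1 := Real.rpow_lt_one_of_one_lt_of_neg ((one_lt_div hc).2 hx) hs
  have hθc : θ * c ^ s = f x ^ s := by
    rw [hθ, Real.div_rpow hx0.le hc.le, div_mul_cancel₀ _ (Real.rpow_pos_of_pos hc s).ne']
  have hhom : AffineMap.homothety x θ y = (1 - θ) • x + θ • y := by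
    rw [AffineMap.homothety_apply, vsub_eq_sub, vadd_eq_add]
    module
  rw [hhom]
  refine le_trans ?_ (hf.rpow_mean_le_apply hs hx0 hc le_rfl hy ⟨hθ0, hθ1⟩)
  have hmean : (1 - θ) * f x ^ s + θ * c ^ s ≤ 2 * f x ^ s := by
    have := Real.rpow_pos_of_pos hx0 s
    nlinarith
  calc 2 ^ (1 / s) * f x = (2 * f x ^ s) ^ (1 / s) := by
        rw [Real.mul_rpow zero_le_two (by positivity), ← Real.rpow_mul hx0.le,
          mul_one_div_cancel hs.ne, Real.rpow_one]
    _ ≤ ((1 - θ) * f x ^ s + θ * c ^ s) ^ (1 / s) :=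
        Real.rpow_le_rpow_of_nonpos (by nlinarith [Real.rpow_pos_of_pos hx0 s])
          hmean (one_div_neg.2 hs).le

end AddCommGroup

section Haar

variable {E : Type*} [NormedAddCommGroup E] [NormedSpace ℝ E] [FiniteDimensional ℝ E]
  [MeasurableSpace E] [BorelSpace E] (μ : Measure E) [μ.IsAddHaarMeasure]
  {s c : ℝ} {f : E → ℝ} {S : Set E}

theorem rpow_le_of_le_on (hf : IsSConcave s f) (hs : s < 0) (hf0 : ∀ x, 0 ≤ f x)
    (hf1 : ∫ x, f x ∂μ = 1) (hS : IsCompact S) (hc : 0 < c) (hcS : ∀ z ∈ S, c ≤ f z)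
    {x : E} (hx : c < f x) :
    2 ^ (1 / s) * μ.real S * f x ^ (1 + s * finrank ℝ E) ≤ c ^ (s * finrank ℝ E) := by
  set d := finrank ℝ E with hd
  set θ := (f x / c) ^ s
  set B := AffineMap.homothety x θ '' S
  have hx0 : 0 < f x := hc.trans hx
  have hθd0 : 0 ≤ θ ^ d := pow_nonneg (Real.rpow_pos_of_pos (div_pos hx0 hc) s).le d
  have hfi : Integrable f μ := by
    by_contra h
    simp [integral_undef h] at hf1
  have hB : IsCompact B := hS.image (AffineMap.homothety x θ).continuous_of_finiteDimensional
  have hBvol : μ.real B = θ ^ d * μ.real S := by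
    rw [measureReal_def, measureReal_def, Measure.addHaar_image_homothety, ENNReal.toReal_mul,
      ← hd, abs_of_nonneg hθd0, ENNReal.toReal_ofReal hθd0]
  have hmass : 2 ^ (1 / s) * f x * μ.real B ≤ 1 := by
    calc 2 ^ (1 / s) * f x * μ.real B ≤ ∫ z in B, f z ∂μ := by
          refine setIntegral_ge_of_const_le_real hB.measurableSet hB.measure_lt_top.ne ?_
            hfi.integrableOn
          rintro _ ⟨y, hy, rfl⟩
          exact hf.two_rpow_mul_le_apply_homothety hs hc hx (hcS y hy)
      _ ≤ ∫ z, f z ∂μ := setIntegral_le_integral hfi (Eventually.of_forall hf0)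
      _ = 1 := hf1
  have hθd : θ ^ d = f x ^ (s * d) / c ^ (s * d) := by
    rw [← Real.rpow_natCast, ← Real.rpow_mul (by positivity), Real.div_rpow hx0.le hc.le]
  have hcd : 0 < c ^ (s * d) := Real.rpow_pos_of_pos hc _
  rw [hBvol, hθd] at hmass
  calc 2 ^ (1 / s) * μ.real S * f x ^ (1 + s * d)
      = (2 ^ (1 / s) * f x * (f x ^ (s * d) / c ^ (s * d) * μ.real S)) * c ^ (s * d) := by
        rw [Real.rpow_add hx0, Real.rpow_one]
        field_simp
    _ ≤ 1 * c ^ (s * d) := by gcongr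
    _ = c ^ (s * d) := one_mul _

theorem le_max_of_le_on (hf : IsSConcave s f) (hs : s < 0) (hsd : 0 < 1 + s * finrank ℝ E)
    (hf0 : ∀ x, 0 ≤ f x) (hf1 : ∫ x, f x ∂μ = 1) (hS : IsCompact S) (hSpos : 0 < μ S)
    (hc : 0 < c) (hcS : ∀ z ∈ S, c ≤ f z) (x : E) :
    f x ≤ max c ((c ^ (s * finrank ℝ E) / (2 ^ (1 / s) * μ.real S))
      ^ (1 / (1 + s * finrank ℝ E))) := by
  rcases le_or_gt (f x) c with hx | hx
  · exact le_max_of_le_left hx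
  refine le_max_of_le_right ?_
  have hx0 : 0 < f x := hc.trans hx
  have hvol : 0 < 2 ^ (1 / s) * μ.real S :=
    mul_pos (Real.rpow_pos_of_pos two_pos _) (ENNReal.toReal_pos hSpos.ne' hS.measure_lt_top.ne)
  have key := hf.rpow_le_of_le_on μ hs hf0 hf1 hS hc hcS hx
  calc f x = (f x ^ (1 + s * finrank ℝ E)) ^ (1 / (1 + s * finrank ℝ E)) := by
        rw [← Real.rpow_mul hx0.le, mul_one_div_cancel hsd.ne', Real.rpow_one]
    _ ≤ _ := by
        gcongr
        rwa [le_div_iff₀' hvol]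

theorem le_max_of_le_on_spanning (hf : IsSConcave s f) (hs : s < 0)
    (hsd : 0 < 1 + s * finrank ℝ E) (hf0 : ∀ x, 0 ≤ f x) (hf1 : ∫ x, f x ∂μ = 1) {t : Set E}
    (ht : t.Finite) (hspan : affineSpan ℝ t = ⊤) (hc : 0 < c) (hct : ∀ z ∈ t, c ≤ f z) (x : E) :
    f x ≤ max c ((c ^ (s * finrank ℝ E) / (2 ^ (1 / s) * μ.real (convexHull ℝ t)))
      ^ (1 / (1 + s * finrank ℝ E))) := by
  have hint : (interior (convexHull ℝ t)).Nonempty :=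
    (convex_convexHull ℝ t).interior_nonempty_iff_affineSpan_eq_top.2
      (by rw [affineSpan_convexHull, hspan])
  exact hf.le_max_of_le_on μ hs hsd hf0 hf1 (ht.isCompact_convexHull ℝ)
    (Measure.measure_pos_of_nonempty_interior μ hint) hc
    (fun z hz => convexHull_min hct (hf.convex_setOf_le hs hc) hz) x

theorem exists_forall_le (hf : IsSConcave s f) (hs : s < 0) (hsd : 0 < 1 + s * finrank ℝ E)
    (hf0 : ∀ x, 0 ≤ f x) (hf1 : ∫ x, f x ∂μ = 1) : ∃ M, ∀ x, f x ≤ M := by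
  obtain ⟨t, hts, htspan, hti⟩ := exists_affineIndependent ℝ E (Function.support f)
  rw [affineSpan_support_eq_top μ (by simp [hf1])] at htspan
  have htfin : t.Finite := finite_set_of_fin_dim_affineIndependent ℝ hti
  have : Finite t := htfin.to_subtype
  obtain ⟨c, hc, hct⟩ := exists_pos_forall_le_of_finite
    fun z : t => (hf0 z).lt_of_ne' (hts z.2)
  exact ⟨_, hf.le_max_of_le_on_spanning μ hs hsd hf0 hf1 htfin htspan hc fun z hz => hct ⟨z, hz⟩⟩

end Haar

end IsSConcave

theorem stmt_13_general (d : ℕ) (s : ℝ) (hs1 : -1 / (d : ℝ) < s) (hs0 : s < 0)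
    (f : ℕ → EuclideanSpace ℝ (Fin d) → ℝ)
    (hf0 : ∀ n x, 0 ≤ f n x)
    (hfdens : ∀ n, ∫ x, f n x = 1)
    (hconc : ∀ n, ∀ x y : EuclideanSpace ℝ (Fin d), ∀ θ : ℝ, θ ∈ Set.Ioo (0:ℝ) 1 →
      0 < f n x → 0 < f n y →
      ((1 - θ) * f n x ^ s + θ * f n y ^ s) ^ (1 / s) ≤ f n ((1 - θ) • x + θ • y))
    (hdim : ∃ p : Fin (d + 1) → EuclideanSpace ℝ (Fin d), AffineIndependent ℝ p ∧
      ∀ i, 0 < liminf (fun n => f n (p i)) atTop) :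
    ∃ M : ℝ, ∀ n x, f n x ≤ M := by
  obtain ⟨p, hp, hlim⟩ := hdim
  have hf : ∀ n, IsSConcave s (f n) := hconc
  have hsd : 0 < 1 + s * finrank ℝ (EuclideanSpace ℝ (Fin d)) := by
    rw [finrank_euclideanSpace_fin]
    rcases Nat.eq_zero_or_pos d with rfl | hd
    · simp
    · have := (div_lt_iff₀ (Nat.cast_pos.2 hd)).1 hs1
      linarith
  have hspan : affineSpan ℝ (range p) = ⊤ :=
    hp.affineSpan_eq_top_iff_card_eq_finrank_add_one.2 (by simp)
  obtain ⟨c, hc, hev⟩ :=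
    exists_pos_eventually_le_of_liminf_pos (fun i n => hf0 n (p i)) hlim
  apply exists_forall_le_of_eventually_cofinite
    (fun n => (hf n).exists_forall_le volume hs0 hsd (hf0 n) (hfdens n))
  rw [Nat.cofinite_eq_atTop]
  exact hev.mono fun n hn => (hf n).le_max_of_le_on_spanning volume hs0 hsd (hf0 n)
    (hfdens n) (finite_range p) hspan hc (forall_mem_range.2 hn)

theorem stmt_13 (d : ℕ) (hd : 0 < d) (s : ℝ) (hs1 : -1 / (d : ℝ) < s) (hs0 : s < 0)
    (f : ℕ → EuclideanSpace ℝ (Fin d) → ℝ)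
    (hf0 : ∀ n x, 0 ≤ f n x)
    (hfdens : ∀ n, ∫ x, f n x = 1)
    (hconc : ∀ n, ∀ x y : EuclideanSpace ℝ (Fin d), ∀ θ : ℝ, θ ∈ Set.Ioo (0:ℝ) 1 →
      0 < f n x → 0 < f n y →
      ((1 - θ) * f n x ^ s + θ * f n y ^ s) ^ (1 / s) ≤ f n ((1 - θ) • x + θ • y))
    (hdim : ∃ p : Fin (d + 1) → EuclideanSpace ℝ (Fin d), AffineIndependent ℝ p ∧
      ∀ i, 0 < liminf (fun n => f n (p i)) atTop) :
    ∃ M : ℝ, ∀ n x, f n x ≤ M :=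
  stmt_13_general d s hs1 hs0 f hf0 hfdens hconc hdim
end

section
/- Let ν be a probability measure on ℝ^d with s-concave density f = g^{-r}, where r = -1/s > d, g convex. Let x₀, …, x_d span a nondegenerate simplex Δ, and set ḡ = (1/d)∑_{i=1}^d g(x_i). If g(x₀) ≥ ḡ, then f(x₀) ≤ ḡ^{-r} ( 1 - d/r + (d/r)·λ_d(Δ)·ḡ^{-r}/ν(Δ) )^{-r}. -/
/-!
Parametrize `Δ = conv(p₀, …, p_d)` by the corner simplex `{l ≥ 0, ∑ lᵢ ≤ 1}` via
`l ↦ (1 - ∑ lᵢ) p₀ + ∑ lᵢ pᵢ₊₁`. By convexity of `g`, on `Δ` the density `f = g ^ (-r)` dominates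
`φ` of the affine interpolation of the values `g(pᵢ)`, where `φ t = t ^ (-r)` is convex.
Cyclic permutations of the coordinates `l` preserve the corner simplex and Lebesgue measure, so
averaging over them and applying Jensen's inequality replaces `g(p₁), …, g(p_d)` by their mean
`ḡ`. The integrand then depends only on `t = ∑ lᵢ`, whose law on the corner simplex has density
`d t ^ (d - 1)`; this gives `ν(Δ) ≥ λ(Δ) J` with
`J = ∫₀¹ d t ^ (d - 1) ((1 - t) g(p₀) + t ḡ) ^ (-r) dt`. Differentiating
`t ^ d ((1 - t) g(p₀) + t ḡ) ^ (-r)` shows `(d / r) ḡ ^ (1 - r) ≤ J (g(p₀) - (1 - d / r) ḡ)` when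
`ḡ ≤ g(p₀)`, and the claim is these two inequalities rearranged.
-/

open MeasureTheory Set
open scoped Pointwise

theorem convexOn_rpow_neg {r : ℝ} (hr : 0 ≤ r) :
    ConvexOn ℝ (Ioi 0) fun x : ℝ ↦ x ^ (-r) := by
  have hlog : ConvexOn ℝ (Ioi 0) fun x ↦ r • -Real.log x :=
    strictConcaveOn_log_Ioi.concaveOn.neg.smul hr
  have hcont : ContinuousOn (fun x ↦ r • -Real.log x) (Ioi 0) :=
    (Real.continuousOn_log.mono fun x hx ↦ ne_of_gt hx).neg.const_smul r
  have hexp : ConvexOn ℝ ((fun x ↦ r • -Real.log x) '' Ioi 0) Real.exp :=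
    convexOn_exp.subset (subset_univ _) (isPreconnected_Ioi.image _ hcont).convex
  refine (hexp.comp hlog (Real.exp_monotone.monotoneOn _)).congr fun x hx ↦ ?_
  simp [Real.rpow_def_of_pos (mem_Ioi.mp hx), mul_comm]

section Profile

variable {d : ℕ} {r a b : ℝ}

theorem sub_mul_add_mul_pos (ha : 0 < a) (hb : 0 < b) {t : ℝ} (ht : t ∈ Icc (0 : ℝ) 1) :
    0 < (1 - t) * a + t * b :=
  convex_Ioi (0 : ℝ) ha hb (sub_nonneg.2 ht.2) ht.1 (by ring)

theorem intervalIntegrable_mul_rpow (ha : 0 < a) (hb : 0 < b) {u : ℝ → ℝ} (hu : Continuous u)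
    (s : ℝ) : IntervalIntegrable (fun t ↦ u t * ((1 - t) * a + t * b) ^ s) volume 0 1 := by
  refine ContinuousOn.intervalIntegrable ?_
  rw [uIcc_of_le zero_le_one]
  exact hu.continuousOn.mul
    (ContinuousOn.rpow_const (by fun_prop) fun t ht ↦ .inl (sub_mul_add_mul_pos ha hb ht).ne')

theorem integral_mul_pow_mul_rpow_add (hd : 0 < d) (ha : 0 < a) (hb : 0 < b) (r : ℝ) :
    (∫ t in (0 : ℝ)..1, d * t ^ (d - 1) * ((1 - t) * a + t * b) ^ (-r)) +
      r * (a - b) * ∫ t in (0 : ℝ)..1, t ^ d * ((1 - t) * a + t * b) ^ (-r - 1) =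
        b ^ (-r) := by
  have hderiv : ∀ t ∈ uIcc (0 : ℝ) 1,
      HasDerivAt (fun t ↦ t ^ d * ((1 - t) * a + t * b) ^ (-r))
        (d * t ^ (d - 1) * ((1 - t) * a + t * b) ^ (-r) +
          r * (a - b) * (t ^ d * ((1 - t) * a + t * b) ^ (-r - 1))) t := by
    intro t ht
    rw [uIcc_of_le zero_le_one] at ht
    have hL : HasDerivAt (fun t : ℝ ↦ (1 - t) * a + t * b) (b - a) t :=
      ((((hasDerivAt_id t).const_sub 1).mul_const a).add
        ((hasDerivAt_id t).mul_const b)).congr_deriv (by ring)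
    exact ((hasDerivAt_pow d t).mul
      (hL.rpow_const (p := -r) (.inl (sub_mul_add_mul_pos ha hb ht).ne'))).congr_deriv (by ring)
  have hJ : IntervalIntegrable (fun t ↦ d * t ^ (d - 1) * ((1 - t) * a + t * b) ^ (-r))
      volume 0 1 :=
    intervalIntegrable_mul_rpow ha hb (by fun_prop) _
  have hK : IntervalIntegrable (fun t ↦ t ^ d * ((1 - t) * a + t * b) ^ (-r - 1)) volume 0 1 :=
    intervalIntegrable_mul_rpow ha hb (by fun_prop) _
  rw [← intervalIntegral.integral_const_mul, ← intervalIntegral.integral_add hJ (hK.const_mul _),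
    intervalIntegral.integral_eq_sub_of_hasDerivAt hderiv (hJ.add (hK.const_mul _))]
  simp [zero_pow hd.ne']

theorem mul_integral_pow_mul_rpow_le (hd : 0 < d) (ha : 0 < a) (hb : 0 < b) :
    d * b * ∫ t in (0 : ℝ)..1, t ^ d * ((1 - t) * a + t * b) ^ (-r - 1) ≤
      ∫ t in (0 : ℝ)..1, d * t ^ (d - 1) * ((1 - t) * a + t * b) ^ (-r) := by
  rw [← intervalIntegral.integral_const_mul]
  refine intervalIntegral.integral_mono_on zero_le_one
    ((intervalIntegrable_mul_rpow ha hb (continuous_pow d) _).const_mul _)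
    (intervalIntegrable_mul_rpow ha hb (u := fun t ↦ d * t ^ (d - 1)) (by fun_prop) _)
    fun t ht ↦ ?_
  set L := (1 - t) * a + t * b
  have hL : 0 < L := sub_mul_add_mul_pos ha hb ht
  have htb : t * b ≤ L := by nlinarith [ht.2]
  have hpow : t ^ d = t ^ (d - 1) * t := by rw [← pow_succ, Nat.sub_add_cancel hd]
  rw [Real.rpow_sub hL, Real.rpow_one, hpow]
  have hcoef : 0 ≤ d * t ^ (d - 1) * L ^ (-r) / L := by have := ht.1; positivity
  calc d * b * (t ^ (d - 1) * t * (L ^ (-r) / L))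
      = d * t ^ (d - 1) * L ^ (-r) / L * (t * b) := by ring
    _ ≤ d * t ^ (d - 1) * L ^ (-r) / L * L := by gcongr
    _ = d * t ^ (d - 1) * L ^ (-r) := div_mul_cancel₀ _ hL.ne'

theorem div_mul_rpow_le_integral_mul (hd : 0 < d) (hb : 0 < b) (hba : b ≤ a) (hr : r ≠ 0) :
    d / r * b ^ (1 - r) ≤
      (∫ t in (0 : ℝ)..1, d * t ^ (d - 1) * ((1 - t) * a + t * b) ^ (-r)) *
        (a - (1 - d / r) * b) := by
  have ha := hb.trans_le hba
  have hparts := integral_mul_pow_mul_rpow_add hd ha hb r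
  have hle := mul_integral_pow_mul_rpow_le (r := r) hd ha hb
  set J := ∫ t in (0 : ℝ)..1, d * t ^ (d - 1) * ((1 - t) * a + t * b) ^ (-r)
  set K := ∫ t in (0 : ℝ)..1, t ^ d * ((1 - t) * a + t * b) ^ (-r - 1)
  have hdiff : J * (a - (1 - d / r) * b) - d / r * b ^ (1 - r) = (a - b) * (J - d * b * K) := by
    rw [sub_eq_add_neg 1 r, Real.rpow_add hb, Real.rpow_one, ← hparts]
    field_simp
    ring
  nlinarith [mul_nonneg (sub_nonneg.2 hba) (sub_nonneg.2 hle)]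

end Profile

section CornerSimplex

variable {d : ℕ}

def cornerSimplex (d : ℕ) : Set (EuclideanSpace ℝ (Fin d)) :=
  {l | (∀ i, 0 ≤ l i) ∧ ∑ i, l i ≤ 1}

theorem isCompact_cornerSimplex : IsCompact (cornerSimplex d) := by
  refine Metric.isCompact_of_isClosed_isBounded ?_ ?_
  · simp only [cornerSimplex, ofPred_and, ofPred_forall]
    exact (isClosed_iInter fun i ↦ isClosed_le continuous_const (by fun_prop)).inter
      (isClosed_le (by fun_prop) continuous_const)
  · refine (Metric.isBounded_iff_subset_closedBall 0).2 ⟨Real.sqrt d, fun l hl ↦ ?_⟩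
    have hle : ∀ i, l i ≤ 1 := fun i ↦
      (Finset.single_le_sum (fun j _ ↦ hl.1 j) (Finset.mem_univ i)).trans hl.2
    rw [Metric.mem_closedBall, dist_zero_right, EuclideanSpace.norm_eq]
    refine Real.sqrt_le_sqrt
      ((Finset.sum_le_sum (g := fun _ ↦ (1 : ℝ)) fun i _ ↦ ?_).trans_eq (by simp))
    rw [Real.norm_eq_abs, sq_abs]
    exact pow_le_one₀ (hl.1 i) (hle i)

theorem measurableSet_cornerSimplex : MeasurableSet (cornerSimplex d) :=
  isCompact_cornerSimplex.isClosed.measurableSet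

theorem cornerSimplex_inter_sum_le {c : ℝ} (hc₀ : 0 ≤ c) (hc₁ : c ≤ 1) :
    cornerSimplex d ∩ {l | ∑ i, l i ≤ c} = c • cornerSimplex d := by
  ext l
  constructor
  · rintro ⟨⟨hl, -⟩, hlc⟩
    rcases hc₀.eq_or_lt with rfl | hc
    · have : l = 0 := by
        ext i
        exact le_antisymm
          ((Finset.single_le_sum (fun j _ ↦ hl j) (Finset.mem_univ i)).trans hlc) (hl i)
      exact ⟨0, ⟨fun _ ↦ le_rfl, by simp⟩, by simp [this]⟩
    · refine ⟨c⁻¹ • l, ⟨fun i ↦ ?_, ?_⟩, smul_inv_smul₀ hc.ne' l⟩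
      · simpa using mul_nonneg (inv_nonneg.2 hc₀) (hl i)
      · simpa [← Finset.mul_sum, inv_mul_le_iff₀ hc] using hlc
  · rintro ⟨m, ⟨hm, hm₁⟩, rfl⟩
    have hsum : ∑ i, (c • m) i = c * ∑ i, m i := by simp [Finset.mul_sum]
    refine ⟨⟨fun i ↦ mul_nonneg hc₀ (hm i), ?_⟩, ?_⟩ <;>
      simp only [mem_ofPred_eq, hsum] <;> nlinarith

theorem lintegral_Ioc_ofReal_mul_pow (hd : 0 < d) {m : ℝ} (hm : 0 ≤ m) :
    ∫⁻ t in Ioc 0 m, ENNReal.ofReal (d * t ^ (d - 1)) = ENNReal.ofReal (m ^ d) := by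
  have hderiv : ∀ t ∈ uIcc 0 m, HasDerivAt (fun t : ℝ ↦ t ^ d) (d * t ^ (d - 1)) t :=
    fun t _ ↦ hasDerivAt_pow d t
  have hint : IntervalIntegrable (fun t : ℝ ↦ d * t ^ (d - 1)) volume 0 m :=
    (by fun_prop : Continuous fun t : ℝ ↦ d * t ^ (d - 1)).intervalIntegrable _ _
  rw [← ofReal_integral_eq_lintegral_ofReal, ← intervalIntegral.integral_of_le hm,
    intervalIntegral.integral_eq_sub_of_hasDerivAt hderiv hint, zero_pow hd.ne', sub_zero]
  · exact hint.1
  · exact ae_restrict_of_forall_mem measurableSet_Ioc fun t ht ↦ by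
      have := ht.1.le; positivity

-- The sublevel set `{∑ i, l i ≤ c}` of the corner simplex is its dilate by `c ∈ [0, 1]`, so the
-- distribution function of `∑ i, l i` is `c ^ d`.
theorem map_sum_volume_restrict_cornerSimplex (hd : 0 < d) :
    (volume.restrict (cornerSimplex d)).map (fun l ↦ ∑ i, l i) =
      volume (cornerSimplex d) •
        (volume.restrict (Ioc 0 1)).withDensity fun t ↦ ENNReal.ofReal (d * t ^ (d - 1)) := by
  have hσ : Measurable fun l : EuclideanSpace ℝ (Fin d) ↦ ∑ i, l i := by fun_prop
  have : IsFiniteMeasure ((volume.restrict (cornerSimplex d)).map (fun l ↦ ∑ i, l i)) :=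
    have : Fact (volume (cornerSimplex d) < ⊤) := ⟨isCompact_cornerSimplex.measure_lt_top⟩
    inferInstance
  refine Measure.ext_of_Iic _ _ fun c ↦ ?_
  rw [Measure.map_apply hσ measurableSet_Iic, Measure.restrict_apply (hσ measurableSet_Iic),
    Measure.smul_apply, withDensity_apply _ measurableSet_Iic,
    Measure.restrict_restrict measurableSet_Iic, smul_eq_mul]
  rcases lt_or_ge c 0 with hc | hc
  · have h₁ : (fun l ↦ ∑ i, l i) ⁻¹' Iic c ∩ cornerSimplex d = ∅ :=
      eq_empty_of_forall_notMem fun l ⟨hlc, hl, _⟩ ↦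
        (Finset.sum_nonneg fun i _ ↦ hl i).not_gt (hc.trans_le' hlc)
    have h₂ : Iic c ∩ Ioc (0 : ℝ) 1 = ∅ :=
      eq_empty_of_forall_notMem fun t ⟨htc, ht, _⟩ ↦ (hc.trans_le' htc).not_gt ht
    simp [h₁, h₂]
  · have h₁ : (fun l ↦ ∑ i, l i) ⁻¹' Iic c ∩ cornerSimplex d =
        cornerSimplex d ∩ {l | ∑ i, l i ≤ min c 1} := by
      ext l
      simp only [mem_inter_iff, mem_preimage, mem_Iic, mem_ofPred_eq, le_min_iff]
      exact ⟨fun ⟨hlc, hl⟩ ↦ ⟨hl, hlc, hl.2⟩, fun ⟨hl, hlc, _⟩ ↦ ⟨hlc, hl⟩⟩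
    have h₂ : Iic c ∩ Ioc (0 : ℝ) 1 = Ioc 0 (min c 1) := by
      ext t
      simp only [mem_inter_iff, mem_Iic, mem_Ioc, le_min_iff]
      tauto
    have hm : 0 ≤ min c 1 := le_min hc zero_le_one
    rw [h₁, h₂, cornerSimplex_inter_sum_le hm (min_le_right c 1),
      Measure.addHaar_smul_of_nonneg _ hm, finrank_euclideanSpace_fin,
      lintegral_Ioc_ofReal_mul_pow hd hm, mul_comm]

theorem setIntegral_cornerSimplex_comp_sum (hd : 0 < d) {h : ℝ → ℝ} (hh : Measurable h) :
    ∫ l in cornerSimplex d, h (∑ i, l i) =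
      volume.real (cornerSimplex d) * ∫ t in (0 : ℝ)..1, d * t ^ (d - 1) * h t := by
  have hσ : Measurable fun l : EuclideanSpace ℝ (Fin d) ↦ ∑ i, l i := by fun_prop
  rw [← integral_map hσ.aemeasurable hh.aestronglyMeasurable,
    map_sum_volume_restrict_cornerSimplex hd, integral_smul_measure,
    integral_withDensity_eq_integral_toReal_smul (by fun_prop)
      (.of_forall fun _ ↦ ENNReal.ofReal_lt_top),
    intervalIntegral.integral_of_le zero_le_one, measureReal_def, smul_eq_mul]
  congr 1
  refine setIntegral_congr_fun measurableSet_Ioc fun t ht ↦ ?_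
  have := ht.1.le
  simp only [smul_eq_mul]
  rw [ENNReal.toReal_ofReal (by positivity)]

end CornerSimplex

section SimplexParam

variable {d : ℕ} {V : Type*}

section Module

variable [AddCommGroup V] [Module ℝ V]

def simplexParam (x : Fin (d + 1) → V) (l : EuclideanSpace ℝ (Fin d)) : V :=
  (1 - ∑ i, l i) • x 0 + ∑ i, l i • x i.succ

def cornerWeights (l : EuclideanSpace ℝ (Fin d)) : Fin (d + 1) → ℝ :=
  Fin.cons (1 - ∑ i, l i) fun i ↦ l i

theorem sum_cornerWeights (l : EuclideanSpace ℝ (Fin d)) : ∑ i, cornerWeights l i = 1 := by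
  simp [cornerWeights, Fin.sum_univ_succ]

theorem cornerWeights_nonneg {l : EuclideanSpace ℝ (Fin d)} (hl : l ∈ cornerSimplex d)
    (i : Fin (d + 1)) : 0 ≤ cornerWeights l i := by
  cases i using Fin.cases with
  | zero => simpa [cornerWeights] using hl.2
  | succ i => simpa [cornerWeights] using hl.1 i

theorem simplexParam_eq_sum (x : Fin (d + 1) → V) (l : EuclideanSpace ℝ (Fin d)) :
    simplexParam x l = ∑ i, cornerWeights l i • x i := by
  simp [simplexParam, cornerWeights, Fin.sum_univ_succ]

theorem Convex.simplexParam_mem {s : Set V} (hs : Convex ℝ s) {x : Fin (d + 1) → V}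
    (hx : ∀ i, x i ∈ s) {l : EuclideanSpace ℝ (Fin d)} (hl : l ∈ cornerSimplex d) :
    simplexParam x l ∈ s := by
  rw [simplexParam_eq_sum]
  exact hs.sum_mem (fun i _ ↦ cornerWeights_nonneg hl i) (sum_cornerWeights l) fun i _ ↦ hx i

theorem ConvexOn.map_simplexParam_le {s : Set V} {g : V → ℝ} (hg : ConvexOn ℝ s g)
    {x : Fin (d + 1) → V} (hx : ∀ i, x i ∈ s) {l : EuclideanSpace ℝ (Fin d)}
    (hl : l ∈ cornerSimplex d) : g (simplexParam x l) ≤ simplexParam (g ∘ x) l := by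
  rw [simplexParam_eq_sum, simplexParam_eq_sum]
  exact hg.map_sum_le (fun i _ ↦ cornerWeights_nonneg hl i) (sum_cornerWeights l) fun i _ ↦ hx i

theorem simplexParam_image_cornerSimplex (x : Fin (d + 1) → V) :
    simplexParam x '' cornerSimplex d = convexHull ℝ (range x) := by
  refine Subset.antisymm (image_subset_iff.2 fun l hl ↦
    (convex_convexHull ℝ _).simplexParam_mem (fun i ↦ subset_convexHull ℝ _ (mem_range_self i))
      hl) ?_
  classical
  have hhull : convexHull ℝ (range x) =
      Fintype.linearCombination ℝ x '' stdSimplex ℝ (Fin (d + 1)) := by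
    rw [← convexHull_basis_eq_stdSimplex, LinearMap.image_convexHull, ← range_comp]
    congr 2
    ext i
    simp [Fintype.linearCombination_apply, ite_smul]
  rw [hhull]
  rintro _ ⟨w, ⟨hw₀, hw₁⟩, rfl⟩
  rw [Fin.sum_univ_succ] at hw₁
  refine ⟨WithLp.toLp 2 fun i ↦ w i.succ, ⟨fun i ↦ hw₀ _, ?_⟩, ?_⟩
  · linarith [hw₀ 0]
  · simp [simplexParam, Fintype.linearCombination_apply, Fin.sum_univ_succ, ← hw₁]

theorem AffineIndependent.injective_simplexParam {x : Fin (d + 1) → V}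
    (hx : AffineIndependent ℝ x) : Function.Injective (simplexParam x) := by
  intro l l' h
  have hw := (affineIndependent_iff_eq_of_fintype_affineCombination_eq ℝ x).1 hx _ _
    (sum_cornerWeights l) (sum_cornerWeights l') (by
      rwa [Finset.affineCombination_eq_linear_combination _ _ _ (sum_cornerWeights l),
        Finset.affineCombination_eq_linear_combination _ _ _ (sum_cornerWeights l'),
        ← simplexParam_eq_sum, ← simplexParam_eq_sum])
  ext i
  simpa [cornerWeights] using congr_fun hw i.succ

theorem simplexParam_piLpCongrLeft (e : Fin d ≃ Fin d) (x : Fin (d + 1) → V)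
    (l : EuclideanSpace ℝ (Fin d)) :
    simplexParam x (LinearIsometryEquiv.piLpCongrLeft 2 ℝ ℝ e l) =
      simplexParam (Fin.cons (x 0) fun i ↦ x (e i).succ) l := by
  simp only [simplexParam, LinearIsometryEquiv.piLpCongrLeft_apply, Equiv.piCongrLeft'_apply]
  rw [Fin.cons_zero, e.symm.sum_comp fun i ↦ l i,
    ← e.sum_comp fun i ↦ l (e.symm i) • x i.succ]
  simp

end Module

section Normed

variable [NormedAddCommGroup V] [NormedSpace ℝ V]

noncomputable def simplexLinear (x : Fin (d + 1) → V) : EuclideanSpace ℝ (Fin d) →L[ℝ] V :=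
  ∑ i, (EuclideanSpace.proj i).smulRight (x i.succ - x 0)

theorem simplexParam_eq_add (x : Fin (d + 1) → V) (l : EuclideanSpace ℝ (Fin d)) :
    simplexParam x l = x 0 + simplexLinear x l := by
  simp [simplexParam, simplexLinear, smul_sub, Finset.sum_sub_distrib, sub_smul,
    ← Finset.sum_smul]
  abel

theorem hasFDerivAt_simplexParam (x : Fin (d + 1) → V) (l : EuclideanSpace ℝ (Fin d)) :
    HasFDerivAt (simplexParam x) (simplexLinear x) l := by
  rw [funext (simplexParam_eq_add x)]
  exact (simplexLinear x).hasFDerivAt.const_add (x 0)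

theorem continuous_simplexParam (x : Fin (d + 1) → V) : Continuous (simplexParam x) :=
  continuous_iff_continuousAt.2 fun l ↦ (hasFDerivAt_simplexParam x l).continuousAt

end Normed

end SimplexParam

section ChangeOfVariables

variable {d : ℕ} {x : Fin (d + 1) → EuclideanSpace ℝ (Fin d)}

theorem setIntegral_convexHull_eq {F : Type*} [NormedAddCommGroup F] [NormedSpace ℝ F]
    (hx : AffineIndependent ℝ x) (φ : EuclideanSpace ℝ (Fin d) → F) :
    ∫ y in convexHull ℝ (range x), φ y =
      |(simplexLinear x).det| • ∫ l in cornerSimplex d, φ (simplexParam x l) := by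
  rw [← simplexParam_image_cornerSimplex, integral_image_eq_integral_abs_det_fderiv_smul volume
    measurableSet_cornerSimplex (fun l _ ↦ (hasFDerivAt_simplexParam x l).hasFDerivWithinAt)
    hx.injective_simplexParam.injOn, integral_smul]

theorem measureReal_convexHull_eq (hx : AffineIndependent ℝ x) :
    volume.real (convexHull ℝ (range x)) =
      |(simplexLinear x).det| * volume.real (cornerSimplex d) := by
  simpa using setIntegral_convexHull_eq hx fun _ ↦ (1 : ℝ)

end ChangeOfVariables

section Symmetrization

variable {d : ℕ}

theorem setIntegral_cornerSimplex_comp_piLpCongrLeft (e : Fin d ≃ Fin d) {F : Type*}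
    [NormedAddCommGroup F] [NormedSpace ℝ F] (φ : EuclideanSpace ℝ (Fin d) → F) :
    ∫ l in cornerSimplex d, φ (LinearIsometryEquiv.piLpCongrLeft 2 ℝ ℝ e l) =
      ∫ l in cornerSimplex d, φ l := by
  set P := LinearIsometryEquiv.piLpCongrLeft 2 ℝ ℝ e
  have hP : ∀ l i, P l i = l (e.symm i) := fun l i ↦ by simp [P]
  have hpre : P ⁻¹' cornerSimplex d = cornerSimplex d := by
    ext l
    simp only [mem_preimage, cornerSimplex, mem_ofPred_eq, hP, e.symm.sum_comp fun i ↦ l i]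
    exact and_congr_left' (e.forall_congr_left (p := fun i ↦ 0 ≤ l i)).symm
  have := P.measurePreserving.setIntegral_preimage_emb P.toHomeomorph.measurableEmbedding φ
    (cornerSimplex d)
  rwa [hpre] at this

theorem setIntegral_simplexParam_cons_add {F : Type*} [NormedAddCommGroup F] [NormedSpace ℝ F]
    [NeZero d] (x : Fin (d + 1) → ℝ) (φ : ℝ → F) (k : Fin d) :
    ∫ l in cornerSimplex d, φ (simplexParam (Fin.cons (x 0) fun i ↦ x (i + k).succ) l) =
      ∫ l in cornerSimplex d, φ (simplexParam x l) := by
  rw [← setIntegral_cornerSimplex_comp_piLpCongrLeft (Equiv.addRight k)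
    fun l ↦ φ (simplexParam x l)]
  simp only [simplexParam_piLpCongrLeft, Equiv.coe_addRight]

theorem sum_smul_simplexParam_cons_add [NeZero d] (x : Fin (d + 1) → ℝ)
    (l : EuclideanSpace ℝ (Fin d)) :
    ∑ k, (d : ℝ)⁻¹ • simplexParam (Fin.cons (x 0) fun i ↦ x (i + k).succ) l =
      (1 - ∑ i, l i) * x 0 + (∑ i, l i) * ((∑ i : Fin d, x i.succ) / d) := by
  have hd : (d : ℝ) ≠ 0 := Nat.cast_ne_zero.2 (NeZero.ne d)
  have hcyc : ∀ i : Fin d, ∑ k, x (i + k).succ = ∑ j : Fin d, x j.succ := fun i ↦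
    Equiv.sum_comp (Equiv.addLeft i) fun j ↦ x j.succ
  simp only [simplexParam, Fin.cons_zero, Fin.cons_succ, smul_eq_mul, ← Finset.mul_sum,
    Finset.sum_add_distrib]
  rw [Finset.sum_comm]
  simp only [← Finset.mul_sum, hcyc, ← Finset.sum_mul, Finset.sum_const, Finset.card_univ,
    Fintype.card_fin, nsmul_eq_mul]
  field_simp

theorem setIntegral_cornerSimplex_comp_mean_le [NeZero d] {I : Set ℝ} {φ : ℝ → ℝ}
    (hφ : ConvexOn ℝ I φ) (hI : IsOpen I) {x : Fin (d + 1) → ℝ} (hx : ∀ i, x i ∈ I) :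
    ∫ l in cornerSimplex d,
        φ ((1 - ∑ i, l i) * x 0 + (∑ i, l i) * ((∑ i : Fin d, x i.succ) / d)) ≤
      ∫ l in cornerSimplex d, φ (simplexParam x l) := by
  have hd : (d : ℝ) ≠ 0 := Nat.cast_ne_zero.2 (NeZero.ne d)
  set A : Fin d → EuclideanSpace ℝ (Fin d) → ℝ :=
    fun k ↦ simplexParam (Fin.cons (x 0) fun i ↦ x (i + k).succ)
  have hA_mem : ∀ k, ∀ l ∈ cornerSimplex d, A k l ∈ I := fun k l hl ↦
    hφ.1.simplexParam_mem (Fin.cases (by simpa using hx 0) fun i ↦ by simpa using hx _) hl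
  have hA_int : ∀ k ∈ Finset.univ,
      IntegrableOn (fun l ↦ (d : ℝ)⁻¹ • φ (A k l)) (cornerSimplex d) := fun k _ ↦
    (((hφ.continuousOn hI).comp (continuous_simplexParam _).continuousOn
      (hA_mem k)).integrableOn_compact isCompact_cornerSimplex).const_mul _
  have hmean_mem : ∀ l ∈ cornerSimplex d, ∑ k, (d : ℝ)⁻¹ • A k l ∈ I := fun l hl ↦
    hφ.1.sum_mem (fun _ _ ↦ by positivity) (by simp) fun k _ ↦ hA_mem k l hl
  have hmean_cont : Continuous fun l ↦ ∑ k, (d : ℝ)⁻¹ • A k l :=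
    continuous_finsetSum _ fun k _ ↦ continuous_const.mul (continuous_simplexParam _)
  simp_rw [← sum_smul_simplexParam_cons_add]
  calc ∫ l in cornerSimplex d, φ (∑ k, (d : ℝ)⁻¹ • A k l)
      ≤ ∫ l in cornerSimplex d, ∑ k, (d : ℝ)⁻¹ • φ (A k l) :=
        setIntegral_mono_on (((hφ.continuousOn hI).comp hmean_cont.continuousOn
          hmean_mem).integrableOn_compact isCompact_cornerSimplex)
          (integrable_finsetSum _ hA_int) measurableSet_cornerSimplex fun l hl ↦
            hφ.map_sum_le (fun _ _ ↦ by positivity) (by simp) fun k _ ↦ hA_mem k l hl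
    _ = ∫ l in cornerSimplex d, φ (simplexParam x l) := by
        rw [integral_finsetSum _ hA_int]
        simp only [smul_eq_mul, integral_const_mul, A,
          setIntegral_simplexParam_cons_add, Finset.sum_const, Finset.card_univ,
          Fintype.card_fin, nsmul_eq_mul]
        field_simp

end Symmetrization

theorem setIntegral_rpow_neg_simplexParam_comp_le {d : ℕ} {V : Type*} [NormedAddCommGroup V]
    [NormedSpace ℝ V] [FiniteDimensional ℝ V] {g : V → ℝ} (hg : ConvexOn ℝ univ g)
    (hgpos : ∀ y, 0 < g y) (x : Fin (d + 1) → V) {r : ℝ} (hr : 0 ≤ r) :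
    ∫ l in cornerSimplex d, simplexParam (g ∘ x) l ^ (-r) ≤
      ∫ l in cornerSimplex d, g (simplexParam x l) ^ (-r) := by
  have hgcont : Continuous g := continuousOn_univ.1 (hg.continuousOn isOpen_univ)
  refine integral_mono_of_nonneg ?_ ?_ (ae_restrict_of_forall_mem measurableSet_cornerSimplex
    fun l hl ↦ ?_)
  · exact ae_restrict_of_forall_mem measurableSet_cornerSimplex fun l hl ↦ Real.rpow_nonneg
      ((hgpos _).le.trans (hg.map_simplexParam_le (fun _ ↦ mem_univ _) hl)) _
  · exact ((hgcont.comp (continuous_simplexParam x)).rpow_const fun l ↦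
      .inl (hgpos _).ne').continuousOn.integrableOn_compact isCompact_cornerSimplex
  · exact Real.rpow_le_rpow_of_nonpos (hgpos _) (hg.map_simplexParam_le (fun _ ↦ mem_univ _) hl)
      (neg_nonpos.2 hr)

theorem rpow_neg_le_mul_rpow_neg {a b r δ J V ν : ℝ} (hb : 0 < b) (hba : b ≤ a) (hδ : 0 ≤ δ)
    (hδr : δ < r) (hV : 0 ≤ V) (hJ : δ / r * b ^ (1 - r) ≤ J * (a - (1 - δ / r) * b))
    (hVJ : V * J ≤ ν) (hν : 0 ≤ ν) :
    a ^ (-r) ≤ b ^ (-r) * (1 - δ / r + δ / r * (V * b ^ (-r)) / ν) ^ (-r) := by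
  have hr : 0 < r := hδ.trans_lt hδr
  have hδr' : δ / r < 1 := (div_lt_one hr).2 hδr
  have hterm : 0 ≤ δ / r * (V * b ^ (-r)) / ν := by positivity
  have hgap : 0 ≤ a - (1 - δ / r) * b := by nlinarith [div_nonneg hδ hr.le]
  have hB : 0 < 1 - δ / r + δ / r * (V * b ^ (-r)) / ν := by linarith
  have hterm_le : δ / r * (V * b ^ (-r)) / ν * b ≤ a - (1 - δ / r) * b := by
    rcases hν.eq_or_lt with rfl | hν
    · rwa [div_zero, zero_mul]
    · rw [div_mul_eq_mul_div, div_le_iff₀ hν]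
      calc δ / r * (V * b ^ (-r)) * b = V * (δ / r * b ^ (1 - r)) := by
            rw [sub_eq_add_neg 1 r, Real.rpow_add hb, Real.rpow_one]; ring
        _ ≤ V * J * (a - (1 - δ / r) * b) := by rw [mul_assoc]; gcongr
        _ ≤ (a - (1 - δ / r) * b) * ν := by rw [mul_comm _ ν]; gcongr
  rw [← Real.mul_rpow hb.le hB.le]
  exact Real.rpow_le_rpow_of_nonpos (mul_pos hb hB) (by nlinarith) (neg_nonpos.2 hr.le)

theorem stmt_14_general (d : ℕ) (hd : 0 < d) (r : ℝ)
    (hrd : (d : ℝ) < r)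
    (g f : EuclideanSpace ℝ (Fin d) → ℝ)
    (hgconv : ConvexOn ℝ Set.univ g) (hgpos : ∀ x, 0 < g x)
    (hf : ∀ x, f x = g x ^ (-r))
    (p : Fin (d + 1) → EuclideanSpace ℝ (Fin d)) (hp : AffineIndependent ℝ p)
    (gbar : ℝ) (hgbar : gbar = (1 / (d : ℝ)) * ∑ i : Fin d, g (p i.succ))
    (hdom : gbar ≤ g (p 0)) :
    f (p 0) ≤ gbar ^ (-r) *
      (1 - (d : ℝ) / r + ((d : ℝ) / r) *
        ((volume (convexHull ℝ (Set.range p))).toReal * gbar ^ (-r)) /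
          (∫ y in convexHull ℝ (Set.range p), f y)) ^ (-r) := by
  have : NeZero d := ⟨hd.ne'⟩
  have hr : 0 < r := (Nat.cast_nonneg d).trans_lt hrd
  have hgbar_pos : 0 < gbar := hgbar ▸ mul_pos (by positivity)
    (Finset.sum_pos (fun i _ ↦ hgpos _) Finset.univ_nonempty)
  set J := ∫ t in (0 : ℝ)..1, d * t ^ (d - 1) * ((1 - t) * g (p 0) + t * gbar) ^ (-r)
  have hJ : volume.real (cornerSimplex d) * J ≤ ∫ l in cornerSimplex d, f (simplexParam p l) :=
    calc volume.real (cornerSimplex d) * J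
        = ∫ l in cornerSimplex d, ((1 - ∑ i, l i) * g (p 0) + (∑ i, l i) * gbar) ^ (-r) :=
          (setIntegral_cornerSimplex_comp_sum hd (by fun_prop)).symm
      _ ≤ ∫ l in cornerSimplex d, simplexParam (g ∘ p) l ^ (-r) := by
          rw [hgbar, one_div_mul_eq_div]
          exact setIntegral_cornerSimplex_comp_mean_le (convexOn_rpow_neg hr.le) isOpen_Ioi
            fun i ↦ hgpos (p i)
      _ ≤ ∫ l in cornerSimplex d, f (simplexParam p l) := by
          simp_rw [hf]
          exact setIntegral_rpow_neg_simplexParam_comp_le hgconv hgpos p hr.le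
  rw [hf, ← measureReal_def, measureReal_convexHull_eq hp]
  refine rpow_neg_le_mul_rpow_neg hgbar_pos hdom (Nat.cast_nonneg d) hrd (by positivity)
    (div_mul_rpow_le_integral_mul hd hgbar_pos hdom hr.ne') ?_
    (integral_nonneg fun y ↦ (hf y).symm ▸ Real.rpow_nonneg (hgpos y).le _)
  rw [setIntegral_convexHull_eq hp, smul_eq_mul, mul_assoc]
  gcongr

theorem stmt_14 (d : ℕ) (hd : 0 < d) (s r : ℝ) (hs : s < 0) (hr : r = -1 / s)
    (hrd : (d : ℝ) < r)
    (g f : EuclideanSpace ℝ (Fin d) → ℝ)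
    (hgconv : ConvexOn ℝ Set.univ g) (hgpos : ∀ x, 0 < g x)
    (hf : ∀ x, f x = g x ^ (-r))
    (hfdens : ∫ x, f x = 1)
    (p : Fin (d + 1) → EuclideanSpace ℝ (Fin d)) (hp : AffineIndependent ℝ p)
    (gbar : ℝ) (hgbar : gbar = (1 / (d : ℝ)) * ∑ i : Fin d, g (p i.succ))
    (hdom : gbar ≤ g (p 0)) :
    f (p 0) ≤ gbar ^ (-r) *
      (1 - (d : ℝ) / r + ((d : ℝ) / r) *
        ((volume (convexHull ℝ (Set.range p))).toReal * gbar ^ (-r)) /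
          (∫ y in convexHull ℝ (Set.range p), f y)) ^ (-r) :=
  stmt_14_general d hd r hrd g f hgconv hgpos hf p hp gbar hgbar hdom
end
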